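/- arXiv:2209.10331 — 4 statements merged into one kernel-verified Lean document; each statement's English description precedes it below -/
import Mathlib

section
/- For the element $w_0: \mathbb{R}^n \to \mathbb{R}^n$ defined by $w_0(x) = (x - 2\langle x, e_1\rangle e_1)/\|x\|^2$ and the translation $n: x \mapsto x + e_1$, the identity $w_0^{-1} n w_0^{-1} = n^{-1} w_0^{-1} n^{-1}$ holds as maps on $\mathbb{R}^n \setminus \{0, -e_1\}$ (suitably interpreted wherever both sides are defined). -/
/-- The boundary map `w₀(x) = (x - 2⟨x,e₁⟩e₁)/‖x‖²` on `ℝ^m \ {0}`. -/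
noncomputable def w0 {m : ℕ} [NeZero m] (x : EuclideanSpace ℝ (Fin m)) :
    EuclideanSpace ℝ (Fin m) :=
  (‖x‖ ^ 2)⁻¹ • (x - (2 * (inner ℝ x (EuclideanSpace.single 0 1 : EuclideanSpace ℝ (Fin m)) : ℝ)) •
    (EuclideanSpace.single 0 1 : EuclideanSpace ℝ (Fin m)))

/-- The identity `w₀⁻¹ n w₀⁻¹ = n⁻¹ w₀⁻¹ n⁻¹` (with `w₀ = w₀⁻¹` and `n` the
translation by `e₁`), valid wherever both sides are defined. -/
theorem stmt0 {n : ℕ} (x e1 : EuclideanSpace ℝ (Fin (n + 1)))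
    (he1 : e1 = EuclideanSpace.single 0 1)
    (hx : x ≠ 0) (h1 : w0 x + e1 ≠ 0) (h2 : x - e1 ≠ 0) :
    w0 (w0 x + e1) = w0 (x - e1) - e1 := by
  have wdef : ∀ z : EuclideanSpace ℝ (Fin (n + 1)),
      w0 z = (‖z‖ ^ 2)⁻¹ • (z - (2 * (inner ℝ z e1 : ℝ)) • e1) := by
    intro z; simp only [w0, he1]
  have hee : (inner ℝ e1 e1 : ℝ) = 1 := by
    subst he1; simp [EuclideanSpace.inner_single_left]
  have hne : ‖e1‖ ^ 2 = 1 := by rw [← real_inner_self_eq_norm_sq, hee]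
  set a : ℝ := inner ℝ x e1 with ha
  have hc : (inner ℝ e1 x : ℝ) = a := by rw [real_inner_comm]
  have hr : (‖x‖ : ℝ) ^ 2 ≠ 0 := pow_ne_zero _ (norm_ne_zero_iff.mpr hx)
  have hs : (‖x - e1‖ : ℝ) ^ 2 ≠ 0 := pow_ne_zero _ (norm_ne_zero_iff.mpr h2)
  set r : ℝ := ‖x‖ ^ 2 with hrdef
  have hw : w0 x = r⁻¹ • (x - (2 * a) • e1) := by rw [wdef]
  have hse : ‖x - e1‖ ^ 2 = r - 2 * a + 1 := by
    rw [norm_sub_sq_real, hne, ← ha]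
  have hinw : (inner ℝ (w0 x) e1 : ℝ) = r⁻¹ * (a - 2 * a) := by
    rw [hw]
    simp only [real_inner_smul_left, inner_sub_left, real_inner_smul_left, hee, ← ha]
    ring
  have h5 : ‖x - (2 * a) • e1‖ ^ 2 = r := by
    rw [norm_sub_sq_real, real_inner_smul_right, norm_smul, mul_pow, hne,
      Real.norm_eq_abs, sq_abs, ← ha]
    ring
  have hnw : ‖w0 x‖ ^ 2 = r⁻¹ := by
    rw [hw, norm_smul, mul_pow, h5, Real.norm_eq_abs, sq_abs]
    field_simp
  have hy : ‖w0 x + e1‖ ^ 2 = (r - 2 * a + 1) / r := by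
    rw [norm_add_sq_real, hnw, hinw, hne]
    field_simp
    ring
  have hy2 : (inner ℝ (w0 x + e1) e1 : ℝ) = r⁻¹ * (a - 2 * a) + 1 := by
    rw [inner_add_left, hinw, hee]
  have hsne : r - 2 * a + 1 ≠ 0 := by rw [← hse]; exact hs
  have hin3 : (inner ℝ (x - e1) e1 : ℝ) = a - 1 := by
    rw [inner_sub_left, hee, ← ha]
  rw [wdef (w0 x + e1), wdef (x - e1), hy, hy2, hse, hin3, hw]
  match_scalars <;> field_simp <;> ring
end

section
/- For $x \in \mathbb{R}^{n-1}\setminus\{0\}$ and $g_{0,e_1,x} := w_0 n^{-1} a_{\|e_1+w_0(x)\|} \rho$ where $\rho$ is any orthogonal map sending $e_1$ to $(e_1+w_0(x))/\|e_1+w_0(x)\|$, the Iwasawa projection satisfies $\pi_A(g_{0,e_1,x}^{-1}) = a_{\|x\|/\|x-e_1\|}$. -/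
/-- `π_A(g_{0,e₁,x}⁻¹) = a_{‖x‖/‖x-e₁‖}`, where
`g_{0,e₁,x} = w₀ n⁻¹ a_{‖e₁+w₀(x)‖} ρ` with `ρ` orthogonal, fixing `eₙ` and sending
`e₁` to the normalization of `e₁ + w₀(x)`.  Here `g_{0,e₁,x}⁻¹(eₙ)` is
`ρ⁻¹(‖e₁+w₀(x)‖⁻¹ • (w₀(eₙ) + e₁))`, and its last coordinate is `‖x‖/‖x-e₁‖`. -/
theorem stmt8 {n : ℕ} (x e1 en : EuclideanSpace ℝ (Fin (n + 2)))
    (he1 : e1 = EuclideanSpace.single 0 1)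
    (hen : en = EuclideanSpace.single (Fin.last (n + 1)) 1)
    (hx0 : x ≠ 0) (hx1 : x ≠ e1) (hxh : x (Fin.last (n + 1)) = 0)
    (ρ : EuclideanSpace ℝ (Fin (n + 2)) ≃ₗᵢ[ℝ] EuclideanSpace ℝ (Fin (n + 2)))
    (hρen : ρ en = en)
    (hρe1 : ρ e1 = ‖e1 + w0 x‖⁻¹ • (e1 + w0 x)) :
    ρ.symm (‖e1 + w0 x‖⁻¹ • (w0 en + e1)) (Fin.last (n + 1)) = ‖x‖ / ‖x - e1‖ := by
  have hL0 : (Fin.last (n + 1) : Fin (n + 2)) ≠ 0 := by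
    simp [Fin.ext_iff, Fin.last]
  have hxn : ‖x‖ ≠ 0 := norm_ne_zero_iff.mpr hx0
  have hxen : ‖x - e1‖ ≠ 0 := by
    rw [norm_ne_zero_iff, sub_ne_zero]; exact hx1
  -- `w0 en = en`
  have henn : ‖en‖ = 1 := by rw [hen]; simp
  have hinner_en : (inner ℝ en (EuclideanSpace.single 0 1 : EuclideanSpace ℝ (Fin (n + 2))) : ℝ)
      = 0 := by
    rw [hen, EuclideanSpace.inner_single_right]
    simp [hL0]
  have hw0en : w0 en = en := by
    rw [w0, hinner_en, henn]; simp
  -- the last coordinate is preserved by `ρ.symm`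
  have hcoordinate : ∀ w : EuclideanSpace ℝ (Fin (n + 2)),
      w (Fin.last (n + 1)) = (inner ℝ w en : ℝ) := by
    intro w
    rw [hen, EuclideanSpace.inner_single_right]
    simp
  have hcoord : ∀ v : EuclideanSpace ℝ (Fin (n + 2)),
      ρ.symm v (Fin.last (n + 1)) = v (Fin.last (n + 1)) := by
    intro v
    calc ρ.symm v (Fin.last (n + 1)) = (inner ℝ (ρ.symm v) en : ℝ) := hcoordinate _
      _ = (inner ℝ (ρ (ρ.symm v)) (ρ en) : ℝ) := (ρ.inner_map_map _ _).symm
      _ = (inner ℝ v en : ℝ) := by rw [ρ.apply_symm_apply, hρen]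
      _ = v (Fin.last (n + 1)) := (hcoordinate v).symm
  -- the key norm identity
  have hne1 : ‖e1‖ = 1 := by rw [he1]; simp
  have hkey : ‖e1 + w0 x‖ = ‖x - e1‖ / ‖x‖ := by
    set t : ℝ := inner ℝ x e1 with ht
    have hw : w0 x = (‖x‖ ^ 2)⁻¹ • (x - (2 * t) • e1) := by rw [w0, ht, he1]
    have hc : (‖x‖ : ℝ) ^ 2 ≠ 0 := pow_ne_zero 2 hxn
    have hsq : ‖e1 + w0 x‖ ^ 2 = (‖x - e1‖ / ‖x‖) ^ 2 := by
      have hxx : (inner ℝ e1 x : ℝ) = t := by rw [ht]; exact real_inner_comm x e1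
      have hee : (inner ℝ e1 e1 : ℝ) = 1 := by
        rw [real_inner_self_eq_norm_sq, hne1]; norm_num
      have h1 : (inner ℝ e1 (w0 x) : ℝ) = (‖x‖ ^ 2)⁻¹ * (t - 2 * t) := by
        rw [hw, real_inner_smul_right, inner_sub_right, real_inner_smul_right, hxx, hee]
        ring
      have h2 : ‖w0 x‖ ^ 2 = (‖x‖ ^ 2)⁻¹ := by
        have h3 : ‖x - (2 * t) • e1‖ ^ 2 = ‖x‖ ^ 2 := by
          rw [norm_sub_sq_real, real_inner_smul_right, ← ht, norm_smul, hne1,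
            Real.norm_eq_abs, mul_pow, sq_abs]
          ring
        rw [hw, norm_smul, mul_pow, h3, Real.norm_eq_abs, abs_of_nonneg (by positivity)]
        field_simp
      rw [norm_add_sq_real, h1, h2, div_pow, norm_sub_sq_real, ← ht, hne1]
      field_simp
      ring
    exact (sq_eq_sq₀ (norm_nonneg _) (by positivity)).mp hsq
  rw [hcoord]
  have hval : (‖e1 + w0 x‖⁻¹ • (w0 en + e1)) (Fin.last (n + 1)) = ‖e1 + w0 x‖⁻¹ := by
    rw [hw0en]
    have h1 : e1 (Fin.last (n + 1)) = 0 := by rw [he1]; simp [hL0]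
    have h2 : en (Fin.last (n + 1)) = 1 := by rw [hen]; simp
    simp [PiLp.smul_apply, PiLp.add_apply, h1, h2]
  rw [hval, hkey, inv_div]
end

section
/- For $x \in \mathbb{R}^{n-1}\setminus\{0,e_1\}$ and $g_{0,e_1,x}$ as defined (sending $\infty \mapsto 0$, $0 \mapsto e_1$, $e_1 \mapsto x$), one has $\pi_A(w_0^{-1} g_{0,e_1,x}^{-1}) = a_{\|x-e_1\|/(2\|x\|)}$ and $\pi_A(w_0^{-1} n^{-1} g_{0,e_1,x}^{-1}) = a_{\|x\|\|x-e_1\|/(1+\|x\|^2)}$. -/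
/-- `π_A(w₀⁻¹ g_{0,e₁,x}⁻¹) = a_{‖x-e₁‖/(2‖x‖)}` and
`π_A(w₀⁻¹ n⁻¹ g_{0,e₁,x}⁻¹) = a_{‖x‖‖x-e₁‖/(1+‖x‖²)}`, expressed via last
coordinates of the corresponding images of `eₙ`, with
`g_{0,e₁,x}⁻¹(eₙ) = ρ⁻¹(‖e₁+w₀(x)‖⁻¹ • (w₀(eₙ) + e₁))`. -/
theorem stmt9 {n : ℕ} (x e1 en : EuclideanSpace ℝ (Fin (n + 2)))
    (he1 : e1 = EuclideanSpace.single 0 1)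
    (hen : en = EuclideanSpace.single (Fin.last (n + 1)) 1)
    (hx0 : x ≠ 0) (hx1 : x ≠ e1) (hxh : x (Fin.last (n + 1)) = 0)
    (ρ : EuclideanSpace ℝ (Fin (n + 2)) ≃ₗᵢ[ℝ] EuclideanSpace ℝ (Fin (n + 2)))
    (hρen : ρ en = en)
    (hρe1 : ρ e1 = ‖e1 + w0 x‖⁻¹ • (e1 + w0 x))
    (y : EuclideanSpace ℝ (Fin (n + 2)))
    (hy : y = ρ.symm (‖e1 + w0 x‖⁻¹ • (w0 en + e1))) :
    w0 y (Fin.last (n + 1)) = ‖x - e1‖ / (2 * ‖x‖) ∧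
    w0 (y - e1) (Fin.last (n + 1)) = ‖x‖ * ‖x - e1‖ / (1 + ‖x‖ ^ 2) := by
  set L := Fin.last (n + 1) with hLdef
  have hL0 : L ≠ 0 := by
    rw [hLdef]; exact Fin.last_pos.ne'
  have hs : ‖x‖ ≠ 0 := norm_ne_zero_iff.mpr hx0
  have hd : ‖x - e1‖ ≠ 0 := by
    rw [norm_ne_zero_iff, sub_ne_zero]; exact hx1
  have he1n : ‖e1‖ = 1 := by rw [he1, EuclideanSpace.norm_single]; norm_num
  have henn : ‖en‖ = 1 := by rw [hen, EuclideanSpace.norm_single]; norm_num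
  have h_e1_L : e1 L = 0 := by
    rw [he1]; simp [EuclideanSpace.single_apply, hL0]
  have hie1en : (inner ℝ e1 en : ℝ) = 0 := by
    rw [he1, hen]; simp [EuclideanSpace.inner_single_left, EuclideanSpace.single_apply,
      hL0]
  set t : ℝ := inner ℝ x e1 with htdef
  set s : ℝ := ‖x‖ with hsdef
  have hw0x : w0 x = (s ^ 2)⁻¹ • (x - (2 * t) • e1) := by
    rw [w0, ← he1]
  have hw0en : w0 en = en := by
    rw [w0, ← he1]
    have h0 : (inner ℝ en e1 : ℝ) = 0 := by rw [real_inner_comm]; exact hie1en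
    rw [h0, henn]
    simp
  have h1 : (inner ℝ (w0 x) e1 : ℝ) = -t / s ^ 2 := by
    rw [hw0x]
    rw [real_inner_smul_left, inner_sub_left, real_inner_smul_left,
      real_inner_self_eq_norm_sq, he1n, ← htdef]
    field_simp
    ring
  have h2 : ‖w0 x‖ ^ 2 = (s ^ 2)⁻¹ := by
    rw [← real_inner_self_eq_norm_sq, hw0x]
    rw [real_inner_smul_left, real_inner_smul_right, inner_sub_left, inner_sub_right,
      inner_sub_right, real_inner_smul_left, real_inner_smul_left, real_inner_smul_right,
      real_inner_smul_right, real_inner_self_eq_norm_sq, real_inner_self_eq_norm_sq,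
      he1n, real_inner_comm x e1, ← htdef]
    field_simp
    ring
  have h3 : (w0 x) L = 0 := by
    rw [hw0x]
    simp [PiLp.smul_apply, PiLp.sub_apply, hxh, h_e1_L]
  have hxe1 : ‖x - e1‖ ^ 2 = s ^ 2 - 2 * t + 1 := by
    rw [norm_sub_sq_real, he1n, ← htdef, ← hsdef]; ring
  set K : ℝ := ‖e1 + w0 x‖ with hKdef
  have hK2 : K ^ 2 = ‖x - e1‖ ^ 2 / s ^ 2 := by
    rw [hKdef, norm_add_sq_real, he1n, real_inner_comm (w0 x) e1, h1, h2, hxe1]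
    field_simp
    ring
  have hK : K = ‖x - e1‖ / s := by
    have hb : (0:ℝ) ≤ ‖x - e1‖ / s := by positivity
    have h2' : K ^ 2 = (‖x - e1‖ / s) ^ 2 := by rw [hK2, div_pow]
    exact (sq_eq_sq₀ (norm_nonneg _) hb).mp h2'
  have hKne : K ≠ 0 := by
    rw [hK]; positivity
  have hρy : ρ y = K⁻¹ • (en + e1) := by
    rw [hy, LinearIsometryEquiv.apply_symm_apply, hw0en]
  have hinner_y_en : (inner ℝ y en : ℝ) = K⁻¹ := by
    rw [← LinearIsometryEquiv.inner_map_map ρ y en, hρy, hρen, real_inner_smul_left,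
      inner_add_left, real_inner_self_eq_norm_sq, henn, hie1en]
    ring
  have hyL : y L = K⁻¹ := by
    have : (inner ℝ y en : ℝ) = y L := by
      rw [hen]; simp [EuclideanSpace.inner_single_right]
    rw [← this, hinner_y_en]
  have hyn : ‖y‖ ^ 2 = 2 * (K⁻¹) ^ 2 := by
    rw [← ρ.norm_map y, hρy, norm_smul, mul_pow, norm_add_sq_real, henn, he1n,
      real_inner_comm e1 en, hie1en]
    simp [abs_of_nonneg (inv_nonneg.mpr (norm_nonneg _))]
    ring
  have hien_w0x : (inner ℝ en (w0 x) : ℝ) = 0 := by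
    rw [hen]; simp [EuclideanSpace.inner_single_left, h3]
  have hye1 : (inner ℝ y e1 : ℝ) = (K⁻¹) ^ 2 * (1 - t / s ^ 2) := by
    rw [← LinearIsometryEquiv.inner_map_map ρ y e1, hρy, hρe1,
      real_inner_smul_left, real_inner_smul_right, inner_add_left, inner_add_right,
      inner_add_right, hien_w0x, real_inner_comm e1 en, hie1en,
      real_inner_self_eq_norm_sq, he1n, real_inner_comm (w0 x) e1, h1]
    field_simp
    ring
  constructor
  · have g1 : w0 y L = (‖y‖ ^ 2)⁻¹ * y L := by
      rw [w0, ← he1]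
      simp [PiLp.smul_apply, PiLp.sub_apply, h_e1_L]
    rw [g1, hyn, hyL, hK]
    field_simp
  · have g2 : w0 (y - e1) L = (‖y - e1‖ ^ 2)⁻¹ * ((y - e1) L) := by
      rw [w0, ← he1]
      simp [PiLp.smul_apply, PiLp.sub_apply, h_e1_L]
    have hyeL : (y - e1) L = K⁻¹ := by
      rw [PiLp.sub_apply, hyL, h_e1_L, sub_zero]
    have hKinv2 : (K⁻¹) ^ 2 = s ^ 2 / ‖x - e1‖ ^ 2 := by
      rw [hK]
      field_simp
    have hne : ‖y - e1‖ ^ 2 = (1 + s ^ 2) / ‖x - e1‖ ^ 2 := by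
      rw [norm_sub_sq_real, hyn, hye1, he1n, hKinv2]
      field_simp
      linear_combination hxe1
    rw [g2, hyeL, hne, hK]
    have h1s : (1:ℝ) + s ^ 2 ≠ 0 := by positivity
    field_simp
end

section
/- For every nonzero alternating bilinear form $\alpha$ on $\mathbb{R}^k$ ($k \geq 2$), the function $F: \prod_{i=1}^k (\mathbb{R}^{n_i-1}\setminus\{0,e_1\}) \to \mathbb{R}$ given by $F(x_1,\dots,x_k) = \alpha\big((\log\|x_i\|)_i, (\log\|e_1 - x_i\|)_i\big)$ is unbounded. -/
set_option maxHeartbeats 1000000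


/-- For every nonzero alternating bilinear form `α` on `ℝ^k` (`k ≥ 2`), the function
`F(x₁,…,x_k) = α((log‖xᵢ‖)ᵢ, (log‖e₁ - xᵢ‖)ᵢ)` on `∏ᵢ (ℝ^{nᵢ-1} \ {0, e₁})` is
unbounded. -/
theorem stmt13 {k : ℕ} (hk : 2 ≤ k) (d : Fin k → ℕ)
    (α : (Fin k → ℝ) →ₗ[ℝ] (Fin k → ℝ) →ₗ[ℝ] ℝ)
    (halt : ∀ v, α v v = 0) (hα : α ≠ 0) :
    ∀ M : ℝ, ∃ x : (i : Fin k) → EuclideanSpace ℝ (Fin (d i + 1)),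
      (∀ i, x i ≠ 0 ∧ x i ≠ EuclideanSpace.single 0 1) ∧
      M < |α (fun i => Real.log ‖x i‖)
            (fun i => Real.log ‖(EuclideanSpace.single 0 1 :
              EuclideanSpace ℝ (Fin (d i + 1))) - x i‖)| := by
  classical
  -- skew-symmetry
  have hskew : ∀ u v, α u v = - α v u := by
    intro u v
    have h := halt (u + v)
    simp only [map_add, LinearMap.add_apply, halt] at h
    linarith
  -- find a nonvanishing off-diagonal entry
  have hex : ∃ i j, α (Pi.single i 1) (Pi.single j 1) ≠ 0 := by
    by_contra h
    push_neg at h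
    apply hα
    apply LinearMap.ext; intro u; apply LinearMap.ext; intro v
    show α u v = 0
    have hu : u = ∑ i, u i • (Pi.single i 1 : Fin k → ℝ) := by
      conv_lhs => rw [← Finset.univ_sum_single u]
      congr 1; ext i; rw [← Pi.single_smul, smul_eq_mul, mul_one]
    have hv : v = ∑ i, v i • (Pi.single i 1 : Fin k → ℝ) := by
      conv_lhs => rw [← Finset.univ_sum_single v]
      congr 1; ext i; rw [← Pi.single_smul, smul_eq_mul, mul_one]
    rw [hu, hv]
    simp [map_sum, map_smul, h]
  obtain ⟨i, j, hc⟩ := hex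
  have hij : i ≠ j := by
    intro he; subst he; exact hc (halt _)
  set Pi1 : Fin k → (Fin k → ℝ) := fun l => Pi.single l 1 with hP
  set c : ℝ := α (Pi1 i) (Pi1 j) with hcdef
  have hc0 : 0 < |c| := abs_pos.mpr hc
  set w : Fin k → ℝ := fun l => if l = i then 0 else if l = j then 0 else 1 with hw
  set Di : ℝ := α (Pi1 i) w with hDi
  set Dj : ℝ := α (Pi1 j) w with hDj
  intro M
  set M' : ℝ := max M 0 with hM'
  set N : ℝ := max 1 ((M' + 1 + |Dj| + 2 * |c| + |Di|) / |c|) with hN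
  have hN1 : 1 ≤ N := le_max_left _ _
  have hNK : M' + 1 + |Dj| + 2 * |c| + |Di| ≤ N * |c| := by
    have h := le_max_right 1 ((M' + 1 + |Dj| + 2 * |c| + |Di|) / |c|)
    rw [div_le_iff₀ hc0] at h
    exact h
  -- the points
  set δ : ℝ := Real.exp (-N) with hδ
  set B : ℝ := Real.exp N with hB
  have hδpos : 0 < δ := Real.exp_pos _
  have hBpos : 0 < B := Real.exp_pos _
  have hB1 : 1 ≤ B := by
    rw [hB, ← Real.exp_zero]; exact Real.exp_le_exp.mpr (by linarith)
  have hδ1 : δ ≤ 1 := by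
    rw [hδ, ← Real.exp_zero]; exact Real.exp_le_exp.mpr (by linarith)
  set t : Fin k → ℝ := fun l => if l = i then 1 + δ else if l = j then -B else -1 with ht
  refine ⟨fun l => t l • EuclideanSpace.single 0 1, ?_, ?_⟩
  · intro l
    have ht0 : t l ≠ 0 := by
      rw [ht]; dsimp only
      split_ifs <;> [linarith; linarith; norm_num]
    have ht1 : t l ≠ 1 := by
      rw [ht]; dsimp only
      split_ifs <;> [linarith; linarith; norm_num]
    have he1 : (EuclideanSpace.single 0 1 : EuclideanSpace ℝ (Fin (d l + 1))) ≠ 0 := by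
      intro h
      have := congrArg norm h
      simp [EuclideanSpace.norm_single] at this
    constructor
    · exact smul_ne_zero ht0 he1
    · intro h
      dsimp only at h
      apply ht1
      have : (t l - 1) • (EuclideanSpace.single 0 1 : EuclideanSpace ℝ (Fin (d l + 1))) = 0 := by
        rw [sub_smul, one_smul, h, sub_self]
      rcases smul_eq_zero.mp this with h' | h'
      · linarith [sub_eq_zero.mp (by linarith [h'] : t l - 1 = 0)]
      · exact absurd h' he1
  · -- identify the two log vectors
    have hnorm : ∀ l, ‖(t l • EuclideanSpace.single 0 1 : EuclideanSpace ℝ (Fin (d l + 1)))‖ = |t l| := by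
      intro l
      rw [norm_smul, EuclideanSpace.norm_single]
      simp [Real.norm_eq_abs]
    have hnorm2 : ∀ l, ‖(EuclideanSpace.single 0 1 : EuclideanSpace ℝ (Fin (d l + 1)))
        - t l • EuclideanSpace.single 0 1‖ = |1 - t l| := by
      intro l
      have : (EuclideanSpace.single 0 1 : EuclideanSpace ℝ (Fin (d l + 1)))
          - t l • EuclideanSpace.single 0 1 = (1 - t l) • EuclideanSpace.single 0 1 := by
        rw [sub_smul, one_smul]
      rw [this, norm_smul, EuclideanSpace.norm_single]
      simp [Real.norm_eq_abs]
    have hu : (fun l => Real.log ‖(t l • EuclideanSpace.single 0 1 : EuclideanSpace ℝ (Fin (d l + 1)))‖)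
        = Real.log (1 + δ) • Pi1 i + N • Pi1 j := by
      funext l
      rw [hnorm l, ht]
      dsimp only
      simp only [hP, Pi.add_apply, Pi.smul_apply, smul_eq_mul]
      by_cases hl : l = i
      · subst hl
        rw [if_pos rfl, Pi.single_eq_same, Pi.single_eq_of_ne hij, abs_of_pos (by linarith)]
        ring
      · rw [if_neg hl, Pi.single_eq_of_ne hl]
        by_cases hl2 : l = j
        · subst hl2
          rw [if_pos rfl, Pi.single_eq_same, abs_neg, abs_of_pos hBpos, hB, Real.log_exp]
          ring
        · rw [if_neg hl2, Pi.single_eq_of_ne hl2]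
          norm_num
    have hv : (fun l => Real.log ‖(EuclideanSpace.single 0 1 : EuclideanSpace ℝ (Fin (d l + 1)))
          - t l • EuclideanSpace.single 0 1‖)
        = (-N) • Pi1 i + Real.log (1 + B) • Pi1 j + Real.log 2 • w := by
      funext l
      rw [hnorm2 l, ht]
      dsimp only
      simp only [hP, hw, Pi.add_apply, Pi.smul_apply, smul_eq_mul]
      by_cases hl : l = i
      · subst hl
        rw [if_pos rfl, if_pos rfl, Pi.single_eq_same, Pi.single_eq_of_ne hij]
        have : |1 - (1 + δ)| = δ := by rw [abs_sub_comm]; simp [abs_of_pos hδpos]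
        rw [this, hδ, Real.log_exp]
        ring
      · rw [if_neg hl, if_neg hl, Pi.single_eq_of_ne hl]
        by_cases hl2 : l = j
        · subst hl2
          rw [if_pos rfl, if_pos rfl, Pi.single_eq_same, sub_neg_eq_add,
            abs_of_pos (by linarith)]
          ring
        · rw [if_neg hl2, if_neg hl2, Pi.single_eq_of_ne hl2]
          norm_num
    rw [hu, hv]
    -- expand
    have hαii : α (Pi1 i) (Pi1 i) = 0 := halt _
    have hαjj : α (Pi1 j) (Pi1 j) = 0 := halt _
    have hαji : α (Pi1 j) (Pi1 i) = -c := by rw [hskew]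
    have hexpand : α (Real.log (1 + δ) • Pi1 i + N • Pi1 j)
        ((-N) • Pi1 i + Real.log (1 + B) • Pi1 j + Real.log 2 • w)
        = c * N ^ 2 + (Real.log 2 * Dj) * N
          + Real.log (1 + δ) * (Real.log (1 + B) * c + Real.log 2 * Di) := by
      simp only [map_add, map_smul, LinearMap.add_apply, LinearMap.smul_apply, smul_eq_mul,
        hαii, hαjj, hαji, ← hcdef, ← hDi, ← hDj]
      ring
    rw [hexpand]
    -- bounds
    have hL0 : 0 < Real.log (1 + δ) := Real.log_pos (by linarith)
    have hL1 : Real.log (1 + δ) ≤ 1 := by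
      have := Real.log_le_sub_one_of_pos (by linarith : (0:ℝ) < 1 + δ)
      linarith
    have hlog2 : 0 < Real.log 2 := Real.log_pos (by norm_num)
    have hlog2' : Real.log 2 ≤ 1 := by
      have := Real.log_le_sub_one_of_pos (by norm_num : (0:ℝ) < 2)
      linarith
    have hG0 : 0 < Real.log (1 + B) := Real.log_pos (by linarith)
    have hG1 : Real.log (1 + B) ≤ N + 1 := by
      have h1 : Real.log (1 + B) ≤ Real.log (2 * B) :=
        Real.log_le_log (by linarith) (by linarith)
      rw [Real.log_mul (by norm_num) (by linarith), hB, Real.log_exp] at h1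
      linarith
    set L := Real.log (1 + δ) with hLdef
    set G := Real.log (1 + B) with hGdef
    set err := L * (G * c + Real.log 2 * Di) with herr
    have herrbound : |err| ≤ (N + 1) * |c| + |Di| := by
      rw [herr, abs_mul]
      have h1 : |L| ≤ 1 := by rw [abs_of_pos hL0]; exact hL1
      have h2 : |G * c + Real.log 2 * Di| ≤ (N + 1) * |c| + |Di| := by
        calc |G * c + Real.log 2 * Di| ≤ |G * c| + |Real.log 2 * Di| := abs_add_le _ _
          _ = |G| * |c| + |Real.log 2| * |Di| := by rw [abs_mul, abs_mul]
          _ ≤ (N + 1) * |c| + 1 * |Di| := by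
              gcongr
              · rw [abs_of_pos hG0]; exact hG1
              · rw [abs_of_pos hlog2]; exact hlog2'
          _ = (N + 1) * |c| + |Di| := by ring
      calc |L| * |G * c + Real.log 2 * Di| ≤ 1 * ((N + 1) * |c| + |Di|) := by
            apply mul_le_mul h1 h2 (abs_nonneg _) (by norm_num)
        _ = (N + 1) * |c| + |Di| := by ring
    have hmain : |c * N ^ 2 + Real.log 2 * Dj * N| ≥ |c| * N ^ 2 - N * |Dj| := by
      have h1 : |c * N ^ 2| - |Real.log 2 * Dj * N| ≤ |c * N ^ 2 + Real.log 2 * Dj * N| := by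
        have h := abs_add_le (c * N ^ 2 + Real.log 2 * Dj * N) (-(Real.log 2 * Dj * N))
        rw [add_neg_cancel_right, abs_neg] at h
        linarith
      have h2 : |c * N ^ 2| = |c| * N ^ 2 := by
        rw [abs_mul, abs_of_nonneg (sq_nonneg N)]
      have h3 : |Real.log 2 * Dj * N| ≤ N * |Dj| := by
        rw [abs_mul, abs_mul, abs_of_pos hlog2, abs_of_pos (by linarith : (0:ℝ) < N)]
        calc Real.log 2 * |Dj| * N ≤ 1 * |Dj| * N := by gcongr
          _ = N * |Dj| := by ring
      linarith
    have htotal : |c| * N ^ 2 - N * |Dj| - ((N + 1) * |c| + |Di|) ≤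
        |c * N ^ 2 + Real.log 2 * Dj * N + err| := by
      have h := abs_add_le (c * N ^ 2 + Real.log 2 * Dj * N + err) (-err)
      rw [add_neg_cancel_right, abs_neg] at h
      linarith
    clear_value Pi1 c w Di Dj M' N δ B t L G err
    have hfinal : M' < |c * N ^ 2 + Real.log 2 * Dj * N + err| := by
      have hM0 : 0 ≤ M' := by rw [hM']; exact le_max_right _ _
      have key : M' + 1 ≤ |c| * N ^ 2 - N * |Dj| - ((N + 1) * |c| + |Di|) := by
        have hsq : N ^ 2 = N * N := sq N
        have e1 : (M' + 1 + |Dj| + 2 * |c| + |Di|) * N ≤ N * |c| * N :=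
          mul_le_mul_of_nonneg_right hNK (by linarith)
        have e2 : 1 * (M' + 1 + |c| + |Di|) ≤ N * (M' + 1 + |c| + |Di|) :=
          mul_le_mul_of_nonneg_right hN1 (by positivity)
        nlinarith [e1, e2, hsq]
      linarith
    calc M ≤ M' := by rw [hM']; exact le_max_left _ _
      _ < _ := hfinal
end
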